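/- For all integers k, n ≥ 0 and all scalars x, z ∈ 𝕜: P_{k,n}(x, z) = Σ_{a=0}^{n} (−1)^a · Ш_{n−a,a}^{↑k} · β_{k,a} · ω_a · z^a x^{n−a} in 𝕜B_∞ (a braid binomial-type expansion of the braid Pochhammer symbol). -/

import Mathlib

/-!
Multiplying `P_{k,n}` by its next factor `x - β_{k+n,1} z` works as in the ordinary binomial
theorem, provided the coefficients `T_{n,a} = Ш_{n-a,a}^{↑k} β_{k,a} ω_a` satisfy `T_{n,0} = 1`,
`T_{n+1,n+1} = T_{n,n} β_{k+n,1}` and the Pascal rule `T_{n+1,a+1} = T_{n,a+1} + T_{n,a} β_{k+n,1}`.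
Since `β_{k,a} ω_a = β_{k,1} β_{k+1,1} ⋯ β_{k+a-1,1}`, the Pascal rule follows from the recursion
of `Ш`: the factor `β_{m+1,1}^{↑(k+a)}` it produces commutes with the braids on the first `k + a`
strands and merges with `β_{k+a,1}` into `β_{k+n,1}`.
-/

namespace BraidPaper

/-- Relations of the infinite Artin braid group `B_∞`.  The generator with index `n : ℕ`
represents the Artin generator `σ_{n+1}` (so generators are `σ_1, σ_2, …`). -/
def BraidRels : Set (FreeGroup ℕ) :=
  {r | (∃ i : ℕ, r = .of i * .of (i + 1) * .of i * (.of (i + 1) * .of i * .of (i + 1))⁻¹) ∨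
       (∃ i j : ℕ, i + 2 ≤ j ∧ r = .of i * .of j * (.of j * .of i)⁻¹)}

/-- The infinite Artin braid group `B_∞`, presented by generators `σ_1, σ_2, …` and the
braid and far-commutativity relations. -/
abbrev BInf : Type := PresentedGroup BraidRels

/-- The Artin generator `σ i` of `B_∞` (meaningful for `i ≥ 1`). -/
def σ (i : ℕ) : BInf := PresentedGroup.of (i - 1)

lemma rel_eq_one {r : FreeGroup ℕ} (hr : r ∈ BraidRels) : PresentedGroup.mk BraidRels r = 1 := by
  have : r ∈ Subgroup.normalClosure BraidRels := Subgroup.subset_normalClosure hr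
  exact (QuotientGroup.eq_one_iff r).mpr this

lemma gen_braid (i : ℕ) :
    (PresentedGroup.of i : BInf) * .of (i + 1) * .of i = .of (i + 1) * .of i * .of (i + 1) := by
  have h := rel_eq_one (Or.inl ⟨i, rfl⟩)
  rw [map_mul, map_mul, map_mul, map_inv, map_mul, map_mul, mul_inv_eq_one] at h
  exact h

lemma gen_comm {i j : ℕ} (hij : i + 2 ≤ j) :
    (PresentedGroup.of i : BInf) * .of j = .of j * .of i := by
  have h := rel_eq_one (Or.inr ⟨i, j, hij, rfl⟩)
  rw [map_mul, map_mul, map_inv, map_mul, mul_inv_eq_one] at h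
  exact h

/-- The shift endomorphism `↑ℓ : B_∞ → B_∞`, `σ_i ↦ σ_{i+ℓ}`. -/
def shift (l : ℕ) : BInf →* BInf :=
  PresentedGroup.toGroup (f := fun n => (PresentedGroup.of (n + l) : BInf)) (by
    rintro r (⟨i, rfl⟩ | ⟨i, j, hij, rfl⟩) <;>
      simp only [map_mul, map_inv, FreeGroup.lift_apply_of, mul_inv_eq_one]
    · have h1 : i + 1 + l = i + l + 1 := by omega
      rw [h1]; exact gen_braid (i + l)
    · exact gen_comm (by omega : (i + l) + 2 ≤ j + l))

/-- The ascending product `σ_i σ_{i+1} ⋯ σ_{i+l-1}` (of `l` factors). -/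
def asc (i l : ℕ) : BInf := ((List.range l).map fun t => σ (i + t)).prod

/-- The descending product `σ_i σ_{i-1} ⋯ σ_{i-k+1}` (of `k` factors). -/
def desc (i k : ℕ) : BInf := ((List.range k).map fun t => σ (i - t)).prod

/-- The block transposition braid
`β_{k,l} = (σ_k σ_{k+1} ⋯ σ_{k+l-1})(σ_{k-1} σ_k ⋯ σ_{k+l-2}) ⋯ (σ_1 σ_2 ⋯ σ_l)`,
with `β_{k,0} = β_{0,l} = 1`. -/
def β (k l : ℕ) : BInf := ((List.range k).map fun r => asc (k - r) l).prod

/-- The positive (Garside) lift `ω_a = β_{1,1} β_{2,1} ⋯ β_{a-1,1}` of the longest element of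
the symmetric group `S_a`, with `ω_0 = ω_1 = 1`. -/
def ω (a : ℕ) : BInf := ((List.range (a - 1)).map fun t => β (t + 1) 1).prod

/-- The copy of the braid group `B_n` inside `B_∞`: the subgroup generated by
`σ_1, …, σ_{n-1}`. -/
def BSub (n : ℕ) : Subgroup BInf := Subgroup.closure {g | ∃ i, 1 ≤ i ∧ i < n ∧ g = σ i}


variable (𝕜 : Type) [CommRing 𝕜]

/-- The canonical embedding of `B_∞` into its group algebra `𝕜B_∞`. -/
noncomputable def ι (g : BInf) : MonoidAlgebra 𝕜 BInf := MonoidAlgebra.of 𝕜 BInf g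

/-- The shift `↑ℓ` extended (as an algebra homomorphism) to the group algebra `𝕜B_∞`. -/
noncomputable def shiftA (l : ℕ) : MonoidAlgebra 𝕜 BInf →ₐ[𝕜] MonoidAlgebra 𝕜 BInf :=
  MonoidAlgebra.mapDomainAlgHom 𝕜 𝕜 (shift l)

/-- The braid shuffle elements `Ш_{m,n} ∈ 𝕜B_∞` (for natural `m, n`), determined by
`Ш_{0,n} = Ш_{m,0} = 1` and the Pascal-type recursion
`Ш_{m,n} = Ш_{m-1,n} + Ш_{m,n-1} β_{m,1}^{↑(n-1)}`. -/
noncomputable def Sh : ℕ → ℕ → MonoidAlgebra 𝕜 BInf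
  | 0, _ => 1
  | _ + 1, 0 => 1
  | m + 1, n + 1 => Sh m (n + 1) + Sh (m + 1) n * ι 𝕜 (shift n (β (m + 1) 1))
  termination_by m n => (m, n)

/-- The braid shuffle elements `Ш_{m,n} ∈ 𝕜B_∞` for integer indices: `Ш_{m,n} = 0` whenever
`m < 0` or `n < 0`. -/
noncomputable def ShZ (m n : ℤ) : MonoidAlgebra 𝕜 BInf :=
  if 0 ≤ m ∧ 0 ≤ n then Sh 𝕜 m.toNat n.toNat else 0

/-- The braid Pochhammer symbol
`P_{k,n}(x,y) = (x - β_{k,1} y)(x - β_{k+1,1} y) ⋯ (x - β_{k+n-1,1} y) ∈ 𝕜B_∞`. -/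
noncomputable def Poch (k n : ℕ) (x y : 𝕜) : MonoidAlgebra 𝕜 BInf :=
  ((List.range n).map fun t =>
    algebraMap 𝕜 (MonoidAlgebra 𝕜 BInf) x - algebraMap 𝕜 (MonoidAlgebra 𝕜 BInf) y * ι 𝕜 (β (k + t) 1)).prod

lemma prod_map_range_succ {M : Type*} [Monoid M] (f : ℕ → M) (n : ℕ) :
    ((List.range (n + 1)).map f).prod = ((List.range n).map f).prod * f n := by
  rw [List.range_succ, List.map_append, List.prod_append, List.map_singleton,
    List.prod_singleton]

lemma prod_map_range_succ' {M : Type*} [Monoid M] (f : ℕ → M) (n : ℕ) :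
    ((List.range (n + 1)).map f).prod = f 0 * ((List.range n).map fun t => f (t + 1)).prod := by
  rw [List.range_succ_eq_map, List.map_cons, List.prod_cons, List.map_map]
  rfl

theorem prod_map_range_sub_eq_sum_of_pascal {R A : Type*} [CommRing R] [Ring A] [Algebra R A]
    (b : ℕ → A) (T : ℕ → ℕ → A) (h_zero : ∀ n, T n 0 = 1)
    (h_diag : ∀ n, T (n + 1) (n + 1) = T n n * b n)
    (h_pascal : ∀ n a, a < n → T (n + 1) (a + 1) = T n (a + 1) + T n a * b n)
    (x z : R) (n : ℕ) :
    ((List.range n).map fun t => algebraMap R A x - algebraMap R A z * b t).prod =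
      ∑ a ∈ Finset.range (n + 1), ((-1 : R) ^ a * z ^ a * x ^ (n - a)) • T n a := by
  induction n with
  | zero => simp [h_zero]
  | succ n ih =>
    set c : ℕ → R := fun a => (-1 : R) ^ a * z ^ a * x ^ (n + 1 - a) with hc
    have h_step : ∀ a ∈ Finset.range (n + 1),
        (((-1 : R) ^ a * z ^ a * x ^ (n - a)) • T n a) *
            (algebraMap R A x - algebraMap R A z * b n) =
          c a • T n a + c (a + 1) • (T n a * b n) := by
      intro a ha
      have hna : n + 1 - a = n - a + 1 := by rw [Finset.mem_range] at ha; omega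
      simp only [hc, Algebra.algebraMap_eq_smul_one, smul_mul_assoc, one_mul, mul_sub,
        mul_smul_comm, mul_one, smul_smul, hna, Nat.add_sub_add_right]
      rw [sub_eq_add_neg, ← neg_smul]
      congr 2 <;> ring
    calc ((List.range (n + 1)).map fun t => algebraMap R A x - algebraMap R A z * b t).prod
        = ∑ a ∈ Finset.range (n + 1), (c a • T n a + c (a + 1) • (T n a * b n)) := by
          rw [prod_map_range_succ, ih, Finset.sum_mul]
          exact Finset.sum_congr rfl h_step
      _ = ∑ a ∈ Finset.range (n + 2), c a • T (n + 1) a := by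
          rw [Finset.sum_add_distrib, Finset.sum_range_succ' (fun a => c a • T n a),
            Finset.sum_range_succ (fun a => c (a + 1) • (T n a * b n)),
            Finset.sum_range_succ' (fun a => c a • T (n + 1) a),
            Finset.sum_range_succ (fun a => c (a + 1) • T (n + 1) (a + 1)), h_diag, h_zero,
            h_zero]
          have h_inner : ∑ a ∈ Finset.range n, c (a + 1) • T (n + 1) (a + 1) =
              ∑ a ∈ Finset.range n, c (a + 1) • T n (a + 1) +
                ∑ a ∈ Finset.range n, c (a + 1) • (T n a * b n) := by
            rw [← Finset.sum_add_distrib]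
            refine Finset.sum_congr rfl fun a ha => ?_
            rw [h_pascal n a (Finset.mem_range.mp ha), smul_add]
          rw [h_inner]
          abel

lemma shift_σ (l : ℕ) {i : ℕ} (hi : 1 ≤ i) : shift l (σ i) = σ (i + l) := by
  simp only [shift, σ, PresentedGroup.toGroup.of]
  congr 1
  omega

lemma shift_shift (l m : ℕ) (g : BInf) : shift l (shift m g) = shift (m + l) g := by
  rw [← MonoidHom.comp_apply]
  congr 1
  refine PresentedGroup.ext fun i => ?_
  simp only [MonoidHom.comp_apply, shift, PresentedGroup.toGroup.of, add_assoc]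

lemma σ_mem_BSub {i n : ℕ} (hi : 1 ≤ i) (hin : i < n) : σ i ∈ BSub n :=
  Subgroup.subset_closure ⟨i, hi, hin, rfl⟩

lemma BSub_mono {m n : ℕ} (h : m ≤ n) : BSub m ≤ BSub n :=
  Subgroup.closure_mono fun _ ⟨i, hi, him, hg⟩ => ⟨i, hi, by omega, hg⟩

/-- The image of `↑l` is generated by `σ_{l+1}, σ_{l+2}, …`, which commute with
`σ_1, …, σ_{l-1}`. -/
lemma commute_shift_of_mem_BSub {l : ℕ} {h : BInf} (hh : h ∈ BSub l) (g : BInf) :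
    Commute (shift l g) h := by
  suffices hle : ⊤ ≤ (Subgroup.centralizer (BSub l : Set BInf)).comap (shift l) from
    (Subgroup.mem_centralizer_iff.mp (hle (Subgroup.mem_top g)) h hh).symm
  rw [← PresentedGroup.closure_range_of, Subgroup.closure_le]
  rintro _ ⟨n, rfl⟩
  rw [SetLike.mem_coe, Subgroup.mem_comap, BSub, Subgroup.centralizer_closure,
    Subgroup.mem_centralizer_iff]
  rintro _ ⟨j, hj, hjl, rfl⟩
  exact gen_comm (by omega)

lemma asc_succ (i l : ℕ) : asc i (l + 1) = σ i * asc (i + 1) l := by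
  rw [asc, asc, prod_map_range_succ', Nat.add_zero]
  simp only [Nat.add_assoc, Nat.add_comm 1]

lemma shift_asc (l : ℕ) {i : ℕ} (hi : 1 ≤ i) (a : ℕ) :
    shift l (asc i a) = asc (i + l) a := by
  simp only [asc, map_list_prod, List.map_map]
  congr 1
  refine List.map_congr_left fun t _ => ?_
  simp only [Function.comp, shift_σ l (by omega : 1 ≤ i + t), Nat.add_right_comm]

lemma β_right_zero (k : ℕ) : β k 0 = 1 :=
  List.prod_eq_one (by simp [asc])

lemma β_succ (k l : ℕ) : β (k + 1) l = asc (k + 1) l * β k l := by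
  simp only [β, prod_map_range_succ', Nat.sub_zero, Nat.add_sub_add_right]

lemma β_one_succ (m : ℕ) : β (m + 1) 1 = σ (m + 1) * β m 1 := by
  rw [β_succ, asc_succ, asc, List.range_zero, List.map_nil, List.prod_nil, mul_one]

lemma β_one_mem_BSub (m : ℕ) : β m 1 ∈ BSub (m + 1) := by
  induction m with
  | zero => exact Subgroup.one_mem _
  | succ m ih =>
    rw [β_one_succ]
    exact Subgroup.mul_mem _ (σ_mem_BSub (by omega) (by omega)) (BSub_mono (by omega) ih)

lemma β_one_add (m b : ℕ) : β (m + b) 1 = shift m (β b 1) * β m 1 := by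
  induction b with
  | zero => rw [Nat.add_zero, show β 0 1 = 1 from rfl, map_one, one_mul]
  | succ b ih =>
    rw [← Nat.add_assoc, β_one_succ, ih, β_one_succ, map_mul, shift_σ m (by omega), mul_assoc,
      Nat.add_right_comm b 1 m, Nat.add_comm b m]

def βProd (k a : ℕ) : BInf := ((List.range a).map fun t => β (k + t) 1).prod

lemma βProd_zero (k : ℕ) : βProd k 0 = 1 := rfl

lemma βProd_succ (k a : ℕ) : βProd k (a + 1) = βProd k a * β (k + a) 1 :=
  prod_map_range_succ _ a

lemma βProd_succ' (k a : ℕ) : βProd k (a + 1) = β k 1 * βProd (k + 1) a := by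
  rw [βProd, βProd, prod_map_range_succ', Nat.add_zero]
  simp only [Nat.add_assoc, Nat.add_comm 1]

lemma ω_eq_βProd (a : ℕ) : ω a = βProd 0 a := by
  cases a with
  | zero => rfl
  | succ a =>
    rw [βProd_succ', β, List.range_zero, List.map_nil, List.prod_nil, one_mul, ω,
      Nat.add_sub_cancel]
    simp only [βProd, Nat.zero_add, Nat.add_comm 1]

lemma βProd_mem_BSub (k a : ℕ) : βProd k a ∈ BSub (k + a) := by
  refine list_prod_mem fun _ hg => ?_
  obtain ⟨t, ht, rfl⟩ := List.mem_map.mp hg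
  exact BSub_mono (by rw [List.mem_range] at ht; omega) (β_one_mem_BSub (k + t))

lemma asc_mul_βProd (a k : ℕ) : asc (k + 1) a * βProd k a = βProd (k + 1) a := by
  induction a generalizing k with
  | zero => rfl
  | succ a ih =>
    have hcomm : Commute (asc (k + 1 + 1) a) (β k 1) := by
      rw [Nat.add_comm (k + 1), ← shift_asc (k + 1) le_rfl]
      exact commute_shift_of_mem_BSub (β_one_mem_BSub k) _
    rw [asc_succ, βProd_succ', βProd_succ', ← ih (k + 1), β_one_succ, mul_assoc,
      ← mul_assoc _ (β k 1), hcomm.eq]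
    simp only [mul_assoc]

lemma β_mul_ω (k a : ℕ) : β k a * ω a = βProd k a := by
  induction k with
  | zero => rw [β, List.range_zero, List.map_nil, List.prod_nil, one_mul, ω_eq_βProd]
  | succ k ih => rw [β_succ, mul_assoc, ih, asc_mul_βProd]

lemma shift_β_one_mul_βProd (k a b : ℕ) :
    shift (k + a) (β b 1) * βProd k (a + 1) = βProd k a * β (k + a + b) 1 := by
  rw [βProd_succ, ← mul_assoc, (commute_shift_of_mem_BSub (βProd_mem_BSub k a) _).eq, mul_assoc,
    ← β_one_add]

lemma ι_mul (g h : BInf) : ι 𝕜 (g * h) = ι 𝕜 g * ι 𝕜 h :=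
  map_mul (MonoidAlgebra.of 𝕜 BInf) g h

lemma ι_one : ι 𝕜 (1 : BInf) = 1 :=
  map_one (MonoidAlgebra.of 𝕜 BInf)

lemma shiftA_ι (l : ℕ) (g : BInf) : shiftA 𝕜 l (ι 𝕜 g) = ι 𝕜 (shift l g) := by
  simp [ι, shiftA, MonoidAlgebra.of_apply, MonoidAlgebra.mapDomainAlgHom_apply]

lemma Sh_zero_left (n : ℕ) : Sh 𝕜 0 n = 1 := by
  rw [Sh]

lemma Sh_zero_right (m : ℕ) : Sh 𝕜 m 0 = 1 := by
  cases m <;> rw [Sh]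

lemma Sh_succ_succ (m n : ℕ) :
    Sh 𝕜 (m + 1) (n + 1) =
      Sh 𝕜 m (n + 1) + Sh 𝕜 (m + 1) n * ι 𝕜 (shift n (β (m + 1) 1)) := by
  rw [Sh]

/-- `Ш_{n-a,a}^{↑k} β_{k,a} ω_a`, with `β_{k,a} ω_a` written as `βProd k a`. -/
noncomputable def shuffleTerm (k n a : ℕ) : MonoidAlgebra 𝕜 BInf :=
  shiftA 𝕜 k (Sh 𝕜 (n - a) a) * ι 𝕜 (βProd k a)

lemma shuffleTerm_zero (k n : ℕ) : shuffleTerm 𝕜 k n 0 = 1 := by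
  rw [shuffleTerm, Sh_zero_right, map_one, βProd_zero, ι_one, mul_one]

lemma shuffleTerm_diag (k n : ℕ) :
    shuffleTerm 𝕜 k (n + 1) (n + 1) = shuffleTerm 𝕜 k n n * ι 𝕜 (β (k + n) 1) := by
  rw [shuffleTerm, shuffleTerm, Nat.sub_self, Nat.sub_self, Sh_zero_left, Sh_zero_left, map_one,
    one_mul, one_mul, βProd_succ, ι_mul]

lemma shuffleTerm_pascal (k n a : ℕ) (h : a < n) :
    shuffleTerm 𝕜 k (n + 1) (a + 1) =
      shuffleTerm 𝕜 k n (a + 1) + shuffleTerm 𝕜 k n a * ι 𝕜 (β (k + n) 1) := by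
  obtain ⟨m, rfl⟩ : ∃ m, n = a + m + 1 := ⟨n - a - 1, by omega⟩
  rw [shuffleTerm, shuffleTerm, shuffleTerm, show a + m + 1 + 1 - (a + 1) = m + 1 by omega,
    show a + m + 1 - (a + 1) = m by omega, show a + m + 1 - a = m + 1 by omega, Sh_succ_succ,
    map_add, add_mul, map_mul, shiftA_ι, shift_shift, mul_assoc, ← ι_mul, Nat.add_comm a k,
    shift_β_one_mul_βProd, ι_mul, ← mul_assoc, show k + a + (m + 1) = k + (a + m + 1) by omega]

/-- the braid binomial-type expansion
`P_{k,n}(x,z) = Σ_{a=0}^{n} (-1)^a Ш_{n-a,a}^{↑k} β_{k,a} ω_a z^a x^{n-a}`. -/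
theorem pochhammer_binomial_expansion (k n : ℕ) (x z : 𝕜) :
    Poch 𝕜 k n x z =
      ∑ a ∈ Finset.range (n + 1),
        ((-1 : 𝕜) ^ a * z ^ a * x ^ (n - a)) •
          (shiftA 𝕜 k (Sh 𝕜 (n - a) a) * ι 𝕜 (β k a) * ι 𝕜 (ω a)) := by
  refine (prod_map_range_sub_eq_sum_of_pascal (fun t => ι 𝕜 (β (k + t) 1))
    (shuffleTerm 𝕜 k) (shuffleTerm_zero 𝕜 k) (shuffleTerm_diag 𝕜 k)
    (shuffleTerm_pascal 𝕜 k) x z n).trans (Finset.sum_congr rfl fun a _ => ?_)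
  rw [shuffleTerm, ← β_mul_ω, ι_mul, ← mul_assoc]

end BraidPaper
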